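/- Let U ⊆ ℝ² be an open convex set and let F = (F₁, F₂) : U → ℝ² be continuously differentiable on U with ∂₁F₂(x) = ∂₂F₁(x) for every x ∈ U. Then there exists a differentiable function φ : U → ℝ such that ∂₁φ = F₁ and ∂₂φ = F₂ on U; that is, every curl-free C¹ vector field on an open convex planar domain is a gradient field. -/

import Mathlib

open ContinuousLinearMap

/-- With `A = dF₁` and `B = dF₂` this is the derivative of the 1-form `F₁ dx + F₂ dy`, so the
curl condition `∂₁F₂ = ∂₂F₁` makes the form closed. -/
theorem smulRight_fst_add_smulRight_snd_apply_comm {𝕜 : Type*} [NontriviallyNormedField 𝕜]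
    (A B : 𝕜 × 𝕜 →L[𝕜] 𝕜) (h : B (1, 0) = A (0, 1)) (u v : 𝕜 × 𝕜) :
    (A.smulRight (fst 𝕜 𝕜 𝕜) + B.smulRight (snd 𝕜 𝕜 𝕜)) u v =
      (A.smulRight (fst 𝕜 𝕜 𝕜) + B.smulRight (snd 𝕜 𝕜 𝕜)) v u := by
  have expand : ∀ (L : 𝕜 × 𝕜 →L[𝕜] 𝕜) (w : 𝕜 × 𝕜), L w = w.1 * L (1, 0) + w.2 * L (0, 1) := by
    intro L w
    calc L w = L (w.1 • (1, 0) + w.2 • (0, 1)) := by congr 1; ext <;> simp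
      _ = w.1 * L (1, 0) + w.2 * L (0, 1) := by simp only [map_add, map_smul, smul_eq_mul]
  simp only [add_apply, smulRight_apply, smul_apply, coe_fst', coe_snd', smul_eq_mul]
  rw [expand A u, expand A v, expand B u, expand B v, h]
  ring

theorem curl_free_is_gradient (U : Set (ℝ × ℝ)) (hU : IsOpen U) (hconv : Convex ℝ U)
    (F₁ F₂ : ℝ × ℝ → ℝ)
    (hF₁ : ContDiffOn ℝ 1 F₁ U) (hF₂ : ContDiffOn ℝ 1 F₂ U)
    (hcurl : ∀ x ∈ U, fderivWithin ℝ F₂ U x (1, 0) = fderivWithin ℝ F₁ U x (0, 1)) :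
    ∃ φ : ℝ × ℝ → ℝ, ∀ x ∈ U,
      HasFDerivAt φ
        (F₁ x • ContinuousLinearMap.fst ℝ ℝ ℝ + F₂ x • ContinuousLinearMap.snd ℝ ℝ ℝ) x := by
  have hω : ∀ x ∈ U, HasFDerivWithinAt (fun y ↦ F₁ y • fst ℝ ℝ ℝ + F₂ y • snd ℝ ℝ ℝ)
      ((fderivWithin ℝ F₁ U x).smulRight (fst ℝ ℝ ℝ) +
        (fderivWithin ℝ F₂ U x).smulRight (snd ℝ ℝ ℝ)) U x := fun x hx ↦
    ((hF₁.differentiableOn one_ne_zero x hx).hasFDerivWithinAt.smul_const (fst ℝ ℝ ℝ)).add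
      ((hF₂.differentiableOn one_ne_zero x hx).hasFDerivWithinAt.smul_const (snd ℝ ℝ ℝ))
  obtain ⟨φ, hφ⟩ := hconv.exists_forall_hasFDerivWithinAt_of_hasFDerivWithinAt_symmetric hω
    fun x hx u _ v _ ↦ smulRight_fst_add_smulRight_snd_apply_comm _ _ (hcurl x hx) u v
  exact ⟨φ, fun x hx ↦ (hφ x hx).hasFDerivAt (hU.mem_nhds hx)⟩
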